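/- arXiv:2406.12796 — 2 statements merged into one kernel-verified Lean document; each statement's English description precedes it below -/
import Mathlib

section
/- If ℓ = {a, b, a·b} is a triple of Veblen points in a Steiner triple system S of order v, then the number of Fano subplanes (sub-STS(7)s) of S containing ℓ is (v−3)/4. -/
def IsVeblenPoint {V : Type} [DecidableEq V] (T : Finset (Finset V)) (x : V) : Prop :=
  ∀ a b c d y : V,
    ({x, a, b} : Finset V) ∈ T → ({x, c, d} : Finset V) ∈ T →
    ({y, a, c} : Finset V) ∈ T → ({y, b, d} : Finset V) ∈ T

/-!
Let `c` be a Veblen point on the line `{a, b, c}` and `x` a point off it. With `p`, `r`, `q` the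
third points of the lines `ax`, `cx`, `cp`, the Veblen property at `c` supplies the lines `pbr`,
`xbq`, `arq`, so the seven points `c, a, p, b, x, r, q` carry a Fano subplane; it is the only
one through `{a, b, c}` and `x`, because closure forces each of its points. Hence the Fano
subplanes through the line partition the `v - 3` points off it into blocks of four.
-/

open Finset

theorem card_eq_add_mul_ncard_of_existsUnique_mem {V : Type*} [Fintype V] [DecidableEq V]
    {ℓ : Finset V} {S : Set (Finset V)} {k : ℕ}
    (hS : ∀ R ∈ S, ℓ ⊆ R ∧ R.card = ℓ.card + k) (hcover : ∀ x ∉ ℓ, ∃! R, R ∈ S ∧ x ∈ R) :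
    Fintype.card V = ℓ.card + k * S.ncard := by
  obtain ⟨S, rfl⟩ := S.toFinite.exists_finset_coe
  rw [Set.ncard_coe_finset]
  have hpart : ℓᶜ = S.biUnion (· \ ℓ) := by
    ext x
    simp only [mem_compl, mem_biUnion, mem_sdiff]
    refine ⟨fun hx => ?_, fun ⟨_, _, _, hx⟩ => hx⟩
    obtain ⟨R, ⟨hR, hxR⟩, -⟩ := hcover x hx
    exact ⟨R, hR, hxR, hx⟩
  have hdisj : (S : Set (Finset V)).PairwiseDisjoint (· \ ℓ) := by
    intro R₁ h₁ R₂ h₂ hne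
    refine disjoint_left.2 fun x hx₁ hx₂ => hne ?_
    rw [mem_sdiff] at hx₁ hx₂
    exact (hcover x hx₁.2).unique ⟨h₁, hx₁.1⟩ ⟨h₂, hx₂.1⟩
  have hcard : ∀ R ∈ S, (R \ ℓ).card = k := fun R hR => by
    rw [card_sdiff_of_subset (hS R hR).1, (hS R hR).2, Nat.add_sub_cancel_left]
  calc Fintype.card V = ℓ.card + ℓᶜ.card := (card_add_card_compl ℓ).symm
    _ = ℓ.card + k * S.card := by
      rw [hpart, card_biUnion hdisj, sum_congr rfl hcard, sum_const, smul_eq_mul, mul_comm]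

section SteinerTripleSystem

variable {V : Type} [DecidableEq V]

def IsSubsystem (T : Finset (Finset V)) (R : Finset V) : Prop :=
  ∀ t ∈ T, 2 ≤ (t ∩ R).card → t ⊆ R

theorem triple_rotate (x y z : V) : ({x, y, z} : Finset V) = {y, z, x} := by
  rw [insert_comm, pair_comm]

theorem ne_of_card_triple_eq_three {x y z : V} (h : ({x, y, z} : Finset V).card = 3) : x ≠ y := by
  rintro rfl
  have := card_le_two (a := x) (b := z)
  simp_all

theorem exists_eq_triple_of_card_eq_three {t : Finset V} (ht : t.card = 3) {u v : V}
    (hu : u ∈ t) (hv : v ∈ t) (huv : u ≠ v) : ∃ w, t = {u, v, w} := by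
  have hsub : ({u, v} : Finset V) ⊆ t := insert_subset hu (singleton_subset_iff.2 hv)
  obtain ⟨w, hw⟩ : ∃ w, t \ {u, v} = {w} :=
    card_eq_one.1 (by rw [card_sdiff_of_subset hsub, ht, card_pair huv])
  refine ⟨w, ?_⟩
  rw [← union_sdiff_of_subset hsub, hw]
  simp

variable {T : Finset (Finset V)}

theorem exists_triple_mem (h3 : ∀ t ∈ T, t.card = 3)
    (hpair : ∀ x y : V, x ≠ y → ∃! t, t ∈ T ∧ x ∈ t ∧ y ∈ t) {u v : V} (huv : u ≠ v) :
    ∃ w, ({u, v, w} : Finset V) ∈ T := by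
  obtain ⟨t, ⟨ht, hu, hv⟩, -⟩ := hpair u v huv
  obtain ⟨w, rfl⟩ := exists_eq_triple_of_card_eq_three (h3 t ht) hu hv huv
  exact ⟨w, ht⟩

theorem IsSubsystem.mem_of_triple_mem {R : Finset V} (hR : IsSubsystem T R) {u v w : V}
    (ht : ({u, v, w} : Finset V) ∈ T) (hu : u ∈ R) (hv : v ∈ R) (huv : u ≠ v) : w ∈ R := by
  have huvR : ({u, v} : Finset V) ⊆ {u, v, w} ∩ R := by
    simp [insert_subset_iff, hu, hv]
  exact hR _ ht (card_pair huv ▸ card_le_card huvR) (by simp)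

theorem isSubsystem_of_forall_pair (hpair : ∀ x y : V, x ≠ y → ∃! t, t ∈ T ∧ x ∈ t ∧ y ∈ t)
    {R : Finset V} (hR : ∀ u ∈ R, ∀ v ∈ R, u ≠ v → ∃ t ∈ T, u ∈ t ∧ v ∈ t ∧ t ⊆ R) :
    IsSubsystem T R := by
  intro t ht h2
  obtain ⟨u, hu, v, hv, huv⟩ := one_lt_card.1 h2
  rw [mem_inter] at hu hv
  obtain ⟨t', ht', hut', hvt', ht'R⟩ := hR u hu.2 v hv.2 huv
  rwa [(hpair u v huv).unique ⟨ht, hu.1, hv.1⟩ ⟨ht', hut', hvt'⟩]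

-- The lines of `PG(2, 2)` are the translates of the difference set `{0, 1, 3}` modulo 7.
def fanoLine (i : Fin 7) : Finset (Fin 7) := {i, i + 1, i + 3}

theorem card_fanoLine (i : Fin 7) : (fanoLine i).card = 3 := by
  revert i; decide

theorem exists_fanoLine_mem_mem : ∀ i j : Fin 7, i ≠ j → ∃ k, i ∈ fanoLine k ∧ j ∈ fanoLine k := by
  decide

theorem image_fanoLine (f : Fin 7 → V) (i : Fin 7) :
    (fanoLine i).image f = {f i, f (i + 1), f (i + 3)} := by
  simp [fanoLine]

def IsFanoMap (T : Finset (Finset V)) (f : Fin 7 → V) : Prop :=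
  ∀ i, ({f i, f (i + 1), f (i + 3)} : Finset V) ∈ T

theorem IsFanoMap.injective {f : Fin 7 → V} (hf : IsFanoMap T f) (h3 : ∀ t ∈ T, t.card = 3) :
    Function.Injective f := by
  intro i j hij
  by_contra hne
  obtain ⟨k, hi, hj⟩ := exists_fanoLine_mem_mem i j hne
  have hinj : Set.InjOn f (fanoLine k) := by
    rw [← card_image_iff, image_fanoLine, card_fanoLine]
    exact h3 _ (hf k)
  exact hne (hinj hi hj hij)

theorem IsFanoMap.isSubsystem_image {f : Fin 7 → V} (hf : IsFanoMap T f)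
    (hpair : ∀ x y : V, x ≠ y → ∃! t, t ∈ T ∧ x ∈ t ∧ y ∈ t) :
    IsSubsystem T (univ.image f) := by
  refine isSubsystem_of_forall_pair hpair ?_
  simp only [mem_image, mem_univ, true_and, forall_exists_index, forall_apply_eq_imp_iff]
  intro i j hij
  obtain ⟨k, hi, hj⟩ := exists_fanoLine_mem_mem i j (ne_of_apply_ne f hij)
  exact ⟨(fanoLine k).image f, image_fanoLine f k ▸ hf k, mem_image_of_mem f hi,
    mem_image_of_mem f hj, image_subset_image (subset_univ _)⟩

theorem IsVeblenPoint.isFanoMap {o a b x p q r : V} (ho : IsVeblenPoint T o)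
    (hl : ({o, a, b} : Finset V) ∈ T) (hp : ({a, x, p} : Finset V) ∈ T)
    (hr : ({o, x, r} : Finset V) ∈ T) (hq : ({o, p, q} : Finset V) ∈ T) :
    IsFanoMap T ![o, a, p, b, x, r, q] := by
  have hpbr : ({p, b, r} : Finset V) ∈ T := ho a b x r p hl hr (triple_rotate p a x ▸ hp)
  have hxbq : ({x, b, q} : Finset V) ∈ T := ho a b p q x hl hq (by rwa [insert_comm])
  have harq : ({a, r, q} : Finset V) ∈ T := ho x r p q a hr hq hp
  intro i
  fin_cases i
  exacts [hl, by rwa [pair_comm], hpbr, by rwa [insert_comm], by rwa [← triple_rotate],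
    by rwa [← triple_rotate], by rwa [triple_rotate]]

theorem existsUnique_fano_of_isVeblenPoint (h3 : ∀ t ∈ T, t.card = 3)
    (hpair : ∀ x y : V, x ≠ y → ∃! t, t ∈ T ∧ x ∈ t ∧ y ∈ t) {o a b x : V}
    (ho : IsVeblenPoint T o) (hl : ({o, a, b} : Finset V) ∈ T)
    (hx : x ∉ ({o, a, b} : Finset V)) :
    ∃! R : Finset V, (R.card = 7 ∧ IsSubsystem T R ∧ {o, a, b} ⊆ R) ∧ x ∈ R := by
  obtain ⟨hxo, hxa, -⟩ : x ≠ o ∧ x ≠ a ∧ x ≠ b := by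
    simpa only [mem_insert, mem_singleton, not_or] using hx
  obtain ⟨p, hp⟩ := exists_triple_mem h3 hpair hxa.symm
  obtain ⟨r, hr⟩ := exists_triple_mem h3 hpair hxo.symm
  have hop : o ≠ p := by
    rintro rfl
    have hoa := ne_of_card_triple_eq_three (h3 _ hl)
    have hline := (hpair o a hoa).unique ⟨hl, by simp, by simp⟩ ⟨hp, by simp, by simp⟩
    exact hx (hline ▸ by simp)
  obtain ⟨q, hq⟩ := exists_triple_mem h3 hpair hop
  set f : Fin 7 → V := ![o, a, p, b, x, r, q]
  have hf : IsFanoMap T f := ho.isFanoMap hl hp hr hq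
  have hmem (i : Fin 7) : f i ∈ univ.image f := mem_image_of_mem f (mem_univ i)
  have hcard : (univ.image f).card = 7 := by
    rw [card_image_of_injective _ (hf.injective h3), card_univ, Fintype.card_fin]
  refine ⟨univ.image f, ⟨⟨hcard, hf.isSubsystem_image hpair, ?_⟩, hmem 4⟩, ?_⟩
  · simp only [insert_subset_iff, singleton_subset_iff]
    exact ⟨hmem 0, hmem 1, hmem 3⟩
  rintro R ⟨⟨hR7, hR, hlR⟩, hxR⟩
  have hoR : o ∈ R := hlR (by simp)
  have haR : a ∈ R := hlR (by simp)
  have hbR : b ∈ R := hlR (by simp)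
  have hpR : p ∈ R := hR.mem_of_triple_mem hp haR hxR hxa.symm
  have hrR : r ∈ R := hR.mem_of_triple_mem hr hoR hxR hxo.symm
  have hqR : q ∈ R := hR.mem_of_triple_mem hq hoR hpR hop
  have hsub : univ.image f ⊆ R := by
    simp only [image_subset_iff, mem_univ, forall_const]
    intro i
    fin_cases i <;> assumption
  exact (eq_of_subset_of_card_le hsub (by rw [hR7, hcard])).symm

end SteinerTripleSystem

theorem fano_count_through_veblen_triple_general {V : Type} [Fintype V] [DecidableEq V]
    (T : Finset (Finset V))
    (h3 : ∀ t ∈ T, t.card = 3)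
    (hpair : ∀ x y : V, x ≠ y → ∃! t, t ∈ T ∧ x ∈ t ∧ y ∈ t)
    (a b c : V) (hl : ({a, b, c} : Finset V) ∈ T)
    (hc : IsVeblenPoint T c) :
    {R : Finset V | R.card = 7 ∧
        (∀ t ∈ T, 2 ≤ (t ∩ R).card → t ⊆ R) ∧
        ({a, b, c} : Finset V) ⊆ R}.ncard = (Fintype.card V - 3) / 4 := by
  rw [← triple_rotate] at hl ⊢
  have hcount := card_eq_add_mul_ncard_of_existsUnique_mem (k := 4)
    (S := {R | R.card = 7 ∧ IsSubsystem T R ∧ {c, a, b} ⊆ R})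
    (fun R ⟨hR7, _, hlR⟩ => ⟨hlR, by rw [hR7, h3 _ hl]⟩)
    (fun x hx => existsUnique_fano_of_isVeblenPoint h3 hpair hc hl hx)
  rw [h3 _ hl] at hcount
  unfold IsSubsystem at hcount
  omega

theorem fano_count_through_veblen_triple {V : Type} [Fintype V] [DecidableEq V]
    (T : Finset (Finset V))
    (h3 : ∀ t ∈ T, t.card = 3)
    (hpair : ∀ x y : V, x ≠ y → ∃! t, t ∈ T ∧ x ∈ t ∧ y ∈ t)
    (a b c : V) (hl : ({a, b, c} : Finset V) ∈ T)
    (ha : IsVeblenPoint T a) (hb : IsVeblenPoint T b) (hc : IsVeblenPoint T c) :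
    {R : Finset V | R.card = 7 ∧
        (∀ t ∈ T, 2 ≤ (t ∩ R).card → t ⊆ R) ∧
        ({a, b, c} : Finset V) ⊆ R}.ncard = (Fintype.card V - 3) / 4 :=
  fano_count_through_veblen_triple_general T h3 hpair a b c hl hc
end

section
/- For any Steiner loop L_Q of order w+1 (with w the number of points of the quotient system Q, having b = w(w−1)/6 triples) and elementary abelian 2-group L_N of order 2^t, the number of factor systems f : L_Q × L_Q → L_N (symmetric functions with f(P,Ω̄)=0 and f(P,Q)=f(P,PQ)) equals 2^{tb}, since a factor system is uniquely determined by its (arbitrary) values on the triples of Q. -/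
structure SteinerLoopStr (L : Type) where
  mul : L → L → L
  one : L
  one_mul : ∀ x, mul one x = x
  comm : ∀ x y, mul x y = mul y x
  mul_self : ∀ x, mul x x = one
  ts : ∀ x y, mul x (mul x y) = y

/-!
The points `≠ 1` of a Steiner loop form a Steiner triple system whose triples are the sets
`{a, b, ab}`. The moves `(x, y) ↦ (y, x)` and `(x, y) ↦ (x, xy)` act transitively on the six
ordered pairs of distinct points of a triple, so a factor system is constant on them; it vanishes on
all other pairs. Hence factor systems are exactly the arbitrary maps from the triples to `N`, and
counting ordered pairs of distinct points `≠ 1` by their triple gives `6b = w(w - 1)`.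
-/

namespace SteinerLoopStr

variable {Q : Type} (S : SteinerLoopStr Q)

theorem mul_one (x : Q) : S.mul x S.one = x := by rw [S.comm, S.one_mul]

variable {S}

theorem mul_eq_one_iff {a b : Q} : S.mul a b = S.one ↔ a = b := by
  refine ⟨fun h => ?_, fun h => h ▸ S.mul_self a⟩
  rw [← S.ts a b, h, S.mul_one]

theorem mul_eq_left_iff {a b : Q} : S.mul a b = a ↔ b = S.one := by
  refine ⟨fun h => ?_, fun h => h ▸ S.mul_one a⟩
  rw [← S.ts a b, h, S.mul_self]

theorem mul_eq_right_iff {a b : Q} : S.mul a b = b ↔ a = S.one := by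
  rw [S.comm, mul_eq_left_iff]

variable (S) [DecidableEq Q]

def triple (p : Q × Q) : Finset Q := {p.1, p.2, S.mul p.1 p.2}

variable {S}

theorem triple_swap (p : Q × Q) : S.triple p.swap = S.triple p := by
  simp only [triple, Prod.fst_swap, Prod.snd_swap, S.comm p.2, Finset.insert_comm]

theorem triple_mul (a b : Q) : S.triple (a, S.mul a b) = S.triple (a, b) := by
  simp only [triple, S.ts, Finset.pair_comm]

/-- Every ordered pair of distinct points of a triple arises from `(a, b)` by the moves
`(x, y) ↦ (y, x)` and `(x, y) ↦ (x, x * y)`. -/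
theorem offDiag_triple_induction {motive : Q × Q → Prop} {a b : Q} (base : motive (a, b))
    (swap : ∀ p, motive p → motive p.swap)
    (mul : ∀ x y, motive (x, y) → motive (x, S.mul x y)) :
    ∀ q ∈ (S.triple (a, b)).offDiag, motive q := by
  have hba : motive (b, S.mul a b) := S.comm a b ▸ mul _ _ (swap _ base)
  rintro ⟨x, y⟩ hq
  simp only [triple, Finset.mem_offDiag, Finset.mem_insert, Finset.mem_singleton] at hq
  obtain ⟨rfl | rfl | rfl, rfl | rfl | rfl, hxy⟩ := hq <;> first
    | exact absurd rfl hxy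
    | exact base
    | exact swap _ base
    | exact mul _ _ base
    | exact swap _ (mul _ _ base)
    | exact hba
    | exact swap _ hba

theorem mem_offDiag_triple_self {p : Q × Q} (h : p.1 ≠ p.2) : p ∈ (S.triple p).offDiag :=
  Finset.mem_offDiag.2 ⟨by simp [triple], by simp [triple], h⟩

variable (S) [Fintype Q]

/-- Ordered pairs of distinct points of the Steiner triple system on `Q \ {1}`. -/
def properPairs : Finset (Q × Q) := (Finset.univ.erase S.one).offDiag

def triples : Finset (Finset Q) := S.properPairs.image S.triple

variable {S}

theorem triple_mem_triples {p : Q × Q} (hp : p ∈ S.properPairs) : S.triple p ∈ S.triples :=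
  Finset.mem_image_of_mem _ hp

theorem mem_properPairs {p : Q × Q} :
    p ∈ S.properPairs ↔ p.1 ≠ S.one ∧ p.2 ≠ S.one ∧ p.1 ≠ p.2 := by
  simp [properPairs]

theorem swap_mem_properPairs {p : Q × Q} (hp : p ∈ S.properPairs) :
    p.swap ∈ S.properPairs := by
  rw [mem_properPairs] at hp ⊢
  exact ⟨hp.2.1, hp.1, hp.2.2.symm⟩

theorem mul_mem_properPairs {a b : Q} (h : (a, b) ∈ S.properPairs) :
    (a, S.mul a b) ∈ S.properPairs := by
  rw [mem_properPairs] at h ⊢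
  exact ⟨h.1, mt mul_eq_one_iff.1 h.2.2, fun h' => h.2.1 (mul_eq_left_iff.1 h'.symm)⟩

theorem mul_mem_properPairs_iff {a b : Q} :
    (a, S.mul a b) ∈ S.properPairs ↔ (a, b) ∈ S.properPairs :=
  ⟨fun h => S.ts a b ▸ mul_mem_properPairs h, mul_mem_properPairs⟩

theorem card_triple {p : Q × Q} (hp : p ∈ S.properPairs) : (S.triple p).card = 3 := by
  rw [mem_properPairs] at hp
  refine Finset.card_eq_three.2 ⟨_, _, _, hp.2.2, ?_, ?_, rfl⟩
  · exact fun h => hp.2.1 (mul_eq_left_iff.1 h.symm)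
  · exact fun h => hp.1 (mul_eq_right_iff.1 h.symm)

theorem filter_properPairs_triple_eq {p : Q × Q} (hp : p ∈ S.properPairs) :
    S.properPairs.filter (S.triple · = S.triple p) = (S.triple p).offDiag := by
  ext q
  rw [Finset.mem_filter]
  constructor
  · rintro ⟨hq, hqp⟩
    exact hqp ▸ mem_offDiag_triple_self (mem_properPairs.1 hq).2.2
  · obtain ⟨a, b⟩ := p
    refine offDiag_triple_induction
      (motive := fun r => r ∈ S.properPairs ∧ S.triple r = S.triple (a, b)) ⟨hp, rfl⟩
      (fun r hr => ?_) (fun x y hr => ?_) q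
    · exact ⟨swap_mem_properPairs hr.1, (triple_swap r).trans hr.2⟩
    · exact ⟨mul_mem_properPairs hr.1, (triple_mul x y).trans hr.2⟩

theorem card_properPairs :
    S.properPairs.card = (Fintype.card Q - 1) * (Fintype.card Q - 2) := by
  rw [properPairs, Finset.offDiag_card, Finset.card_erase_of_mem (Finset.mem_univ _),
    Finset.card_univ, ← Nat.mul_sub_one, Nat.sub_sub]

theorem card_triples :
    S.triples.card = (Fintype.card Q - 1) * (Fintype.card Q - 2) / 6 := by
  have hfiber : ∀ s ∈ S.triples, (S.properPairs.filter (S.triple · = s)).card = 6 := by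
    simp only [triples, Finset.mem_image]
    rintro _ ⟨p, hp, rfl⟩
    rw [filter_properPairs_triple_eq hp, Finset.offDiag_card, card_triple hp]
  rw [← card_properPairs,
    Finset.card_eq_sum_card_fiberwise fun _ => triple_mem_triples,
    Finset.sum_const_nat hfiber, Nat.mul_div_cancel _ (by norm_num)]

variable (S) in
def IsFactorSystem {N : Type} [Zero N] (f : Q → Q → N) : Prop :=
  (∀ P R : Q, f P R = f R P) ∧ (∀ P : Q, f P S.one = 0) ∧ (∀ P : Q, f S.one P = 0) ∧
    (∀ P : Q, f P P = 0) ∧ (∀ P R : Q, f P R = f P (S.mul P R))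

namespace IsFactorSystem

variable {N : Type} [Zero N] {f : Q → Q → N} (hf : S.IsFactorSystem f)
include hf

theorem apply_eq_zero {P R : Q} (h : (P, R) ∉ S.properPairs) : f P R = 0 := by
  obtain ⟨-, hR, hP, hdiag, -⟩ := hf
  rw [mem_properPairs] at h
  by_cases hP1 : P = S.one
  · exact hP1 ▸ hP R
  by_cases hR1 : R = S.one
  · exact hR1 ▸ hR P
  have hPR : P = R := by tauto
  exact hPR ▸ hdiag P

theorem apply_eq_of_triple_eq {p q : Q × Q} (hq : q ∈ S.properPairs)
    (h : S.triple q = S.triple p) : f q.1 q.2 = f p.1 p.2 := by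
  obtain ⟨hsymm, -, -, -, hmul⟩ := hf
  obtain ⟨a, b⟩ := p
  refine offDiag_triple_induction (motive := fun r => f r.1 r.2 = f a b) rfl
    (fun r hr => (hsymm _ _).trans hr) (fun x y hr => (hmul x y).symm.trans hr) q
    (h ▸ mem_offDiag_triple_self (mem_properPairs.1 hq).2.2)

end IsFactorSystem

variable (S) in
def extendTriples {N : Type} [Zero N] (g : S.triples → N) (P R : Q) : N :=
  if h : (P, R) ∈ S.properPairs then g ⟨S.triple (P, R), triple_mem_triples h⟩ else 0

variable {N : Type} [Zero N] {P R : Q}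

theorem extendTriples_of_mem (g : S.triples → N) (h : (P, R) ∈ S.properPairs) :
    S.extendTriples g P R = g ⟨S.triple (P, R), triple_mem_triples h⟩ :=
  dif_pos h

theorem extendTriples_of_not_mem (g : S.triples → N) (h : (P, R) ∉ S.properPairs) :
    S.extendTriples g P R = 0 :=
  dif_neg h

theorem isFactorSystem_extendTriples (g : S.triples → N) :
    S.IsFactorSystem (S.extendTriples g) := by
  refine ⟨fun P R => ?_, fun P => ?_, fun P => ?_, fun P => ?_, fun P R => ?_⟩
  · by_cases h : (P, R) ∈ S.properPairs
    · rw [extendTriples_of_mem g h, extendTriples_of_mem g (swap_mem_properPairs h : (R, P) ∈ _)]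
      exact congrArg g (Subtype.ext (triple_swap (P, R)).symm)
    · rw [extendTriples_of_not_mem g h,
        extendTriples_of_not_mem g fun h' => h (swap_mem_properPairs h')]
  · exact extendTriples_of_not_mem g fun h => (mem_properPairs.1 h).2.1 rfl
  · exact extendTriples_of_not_mem g fun h => (mem_properPairs.1 h).1 rfl
  · exact extendTriples_of_not_mem g fun h => (mem_properPairs.1 h).2.2 rfl
  · by_cases h : (P, R) ∈ S.properPairs
    · rw [extendTriples_of_mem g h, extendTriples_of_mem g (mul_mem_properPairs h)]
      exact congrArg g (Subtype.ext (triple_mul P R).symm)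
    · rw [extendTriples_of_not_mem g h,
        extendTriples_of_not_mem g (mt mul_mem_properPairs_iff.1 h)]

theorem extendTriples_injective : Function.Injective (S.extendTriples (N := N)) := by
  intro g g' h
  funext ⟨s, hs⟩
  obtain ⟨⟨a, b⟩, hp, rfl⟩ := Finset.mem_image.1 hs
  simpa only [extendTriples_of_mem _ hp] using congr_fun₂ h a b

theorem range_extendTriples :
    Set.range (S.extendTriples (N := N)) = {f | S.IsFactorSystem f} := by
  ext f
  refine ⟨fun ⟨g, hg⟩ => hg ▸ isFactorSystem_extendTriples g, fun hf => ?_⟩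
  have hrep : ∀ s : S.triples, ∃ p ∈ S.properPairs, S.triple p = s :=
    fun s => Finset.mem_image.1 s.2
  choose rep hrep_mem hrep_triple using hrep
  refine ⟨fun s => f (rep s).1 (rep s).2, funext₂ fun P R => ?_⟩
  by_cases h : (P, R) ∈ S.properPairs
  · rw [extendTriples_of_mem _ h]
    exact hf.apply_eq_of_triple_eq (p := (P, R)) (hrep_mem _) (hrep_triple _)
  · rw [extendTriples_of_not_mem _ h, hf.apply_eq_zero h]

theorem ncard_setOf_isFactorSystem [Fintype N] :
    {f : Q → Q → N | S.IsFactorSystem f}.ncard = Fintype.card N ^ S.triples.card := by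
  rw [← range_extendTriples, Set.ncard_range_of_injective extendTriples_injective,
    Nat.card_eq_fintype_card, Fintype.card_fun, Fintype.card_coe]

end SteinerLoopStr

theorem number_of_factor_systems_general {Q N : Type} [Fintype Q]
    [Fintype N] [AddCommGroup N]
    (S : SteinerLoopStr Q) (t w : ℕ)
    (hQ : Fintype.card Q = w + 1)
    (hN : Fintype.card N = 2 ^ t) :
    {f : Q → Q → N | (∀ P R : Q, f P R = f R P) ∧
        (∀ P : Q, f P S.one = 0) ∧ (∀ P : Q, f S.one P = 0) ∧
        (∀ P : Q, f P P = 0) ∧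
        (∀ P R : Q, f P R = f P (S.mul P R))}.ncard =
      2 ^ (t * (w * (w - 1) / 6)) := by
  classical
  change {f : Q → Q → N | S.IsFactorSystem f}.ncard = _
  rw [SteinerLoopStr.ncard_setOf_isFactorSystem, SteinerLoopStr.card_triples, hN, hQ, ← pow_mul]
  rfl

theorem number_of_factor_systems {Q N : Type} [Fintype Q] [DecidableEq Q]
    [Fintype N] [AddCommGroup N] (hN2 : ∀ x : N, x + x = 0)
    (S : SteinerLoopStr Q) (t w : ℕ)
    (hQ : Fintype.card Q = w + 1)
    (hN : Fintype.card N = 2 ^ t) :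
    {f : Q → Q → N | (∀ P R : Q, f P R = f R P) ∧
        (∀ P : Q, f P S.one = 0) ∧ (∀ P : Q, f S.one P = 0) ∧
        (∀ P : Q, f P P = 0) ∧
        (∀ P R : Q, f P R = f P (S.mul P R))}.ncard =
      2 ^ (t * (w * (w - 1) / 6)) :=
  number_of_factor_systems_general S t w hQ hN
end
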